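/- Let G and G′ be two infinite groups. Suppose G has a strong Remak decomposition H = H₁ × ⋯ × H_p that is unique up to equivalence (every strong Remak decomposition of G is equivalent to it), and G′ has a strong Remak decomposition H′ = H′₁ × ⋯ × H′_q that is unique up to equivalence. Then G and G′ are commensurable if and only if p = q and, up to a permutation of the factors, Hᵢ and H′ᵢ are commensurable for every i ∈ {1,…,p}. -/

import Mathlib

namespace ArtinPaper

variable {B : Type*}

/-- The word `Π(s,t,m) = sts⋯` (`m` letters, starting with `s`), as an element of the
free group on `B`. -/
def piWord (s t : B) (m : ℕ) : FreeGroup B :=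
  ((CoxeterSystem.alternatingWord t s m).map FreeGroup.of).prod

/-- The braid relators `Π(s,t,m_{s,t}) Π(t,s,m_{s,t})⁻¹` of a Coxeter matrix (the entry `0`
plays the role of `∞`, in which case the relator is trivial). -/
def artinRelationsSet (M : CoxeterMatrix B) : Set (FreeGroup B) :=
  { r | ∃ s t : B, r = piWord s t (M s t) * (piWord t s (M s t))⁻¹ }

/-- The Artin group `A[Γ]` of a Coxeter graph `Γ` (encoded by its Coxeter matrix `M`). -/
abbrev ArtinGroup (M : CoxeterMatrix B) : Type _ :=
  PresentedGroup (artinRelationsSet M)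

/-- The standard generators of the Artin group. -/
def ArtinGroup.of (M : CoxeterMatrix B) (s : B) : ArtinGroup M :=
  PresentedGroup.of s

/-- The normal subgroup of `A[Γ]` generated by the squares of the standard generators. -/
def squaresClosure (M : CoxeterMatrix B) : Subgroup (ArtinGroup M) :=
  Subgroup.normalClosure { x | ∃ s : B, x = (ArtinGroup.of M s) ^ 2 }

instance squaresClosure_normal (M : CoxeterMatrix B) : (squaresClosure M).Normal :=
  Subgroup.normalClosure_normal

/-- The Coxeter group `W[Γ]`, realized as the quotient of `A[Γ]` by the relations `s² = 1`. -/
abbrev CoxeterQuot (M : CoxeterMatrix B) : Type _ :=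
  ArtinGroup M ⧸ squaresClosure M

/-- The canonical projection `θ : A[Γ] → W[Γ]`. -/
def artinToCoxeter (M : CoxeterMatrix B) : ArtinGroup M →* CoxeterQuot M :=
  QuotientGroup.mk' (squaresClosure M)

/-- `Γ` has spherical type if its Coxeter group is finite. -/
def IsSpherical (M : CoxeterMatrix B) : Prop :=
  Finite (CoxeterQuot M)

/-- The pure Artin group `CA[Γ] = Ker θ`. -/
def CA (M : CoxeterMatrix B) : Subgroup (ArtinGroup M) :=
  (artinToCoxeter M).ker

/-- `⎯CA[Γ] = CA[Γ]/Z(CA[Γ])`. -/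
abbrev CAbar (M : CoxeterMatrix B) : Type _ :=
  ↥(CA M) ⧸ Subgroup.center ↥(CA M)

/-- `⎯A[Γ] = A[Γ]/Z(A[Γ])`. -/
abbrev Abar (M : CoxeterMatrix B) : Type _ :=
  ArtinGroup M ⧸ Subgroup.center (ArtinGroup M)

/-- The Coxeter graph of `M`: vertices `B`, an edge between `s ≠ t` whenever `m_{s,t} ≥ 3`
(where the entry `0` denotes `∞`, hence also gives an edge). -/
def coxeterGraph (M : CoxeterMatrix B) : SimpleGraph B where
  Adj s t := s ≠ t ∧ (M s t = 0 ∨ 3 ≤ M s t)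
  symm := ⟨fun s t h => ⟨h.1.symm, by rw [M.symmetric t s]; exact h.2⟩⟩
  loopless := ⟨fun s h => h.1 rfl⟩

/-- The restriction of a Coxeter matrix to a set of vertices (an induced subgraph). -/
def restrictMatrix (M : CoxeterMatrix B) (P : Set B) : CoxeterMatrix P where
  M := Matrix.of fun s t => M s.1 t.1
  isSymm := Matrix.IsSymm.ext fun s t => M.symmetric t.1 s.1
  diagonal s := M.diagonal s.1
  off_diagonal s t h := M.off_diagonal s.1 t.1 fun h' => h (Subtype.ext h')

/-- Two groups are (abstractly) commensurable if they have isomorphic finite index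
subgroups. -/
def AbsCommensurable (G H : Type*) [Group G] [Group H] : Prop :=
  ∃ (G₀ : Subgroup G) (H₀ : Subgroup H),
    G₀.FiniteIndex ∧ H₀.FiniteIndex ∧ Nonempty (G₀ ≃* H₀)

/-- `G = H × K` as an internal direct product of two of its subgroups. -/
def IsInternalProduct {G : Type*} [Group G] (H K : Subgroup G) : Prop :=
  H.Normal ∧ K.Normal ∧ H ⊓ K = ⊥ ∧ H ⊔ K = ⊤

/-- `G = H₁ × ⋯ × H_m` as an internal direct product of a family of subgroups. -/
def IsInternalProductFamily {G : Type*} [Group G] {ι : Type*} (H : ι → Subgroup G) : Prop :=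
  (∀ i, (H i).Normal) ∧ iSupIndep H ∧ (⨆ i, H i) = ⊤

/-- A group is indecomposable if it admits no internal direct product decomposition with
both factors nontrivial. -/
def Indecomposable (G : Type*) [Group G] : Prop :=
  ∀ H K : Subgroup G, IsInternalProduct H K → H = ⊥ ∨ K = ⊥

/-- A group is strongly indecomposable if it is infinite and all of its finite index
subgroups are indecomposable. -/
def StronglyIndecomposable (G : Type*) [Group G] : Prop :=
  Infinite G ∧ ∀ U : Subgroup G, U.FiniteIndex → Indecomposable ↥U

/-- A strong Remak decomposition of `G`: a finite index subgroup `H` together with an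
internal direct product decomposition of `H` into strongly indecomposable factors. -/
structure StrongRemakDecomposition (G : Type*) [Group G] (m : ℕ) where
  H : Subgroup G
  finiteIndex : H.FiniteIndex
  factor : Fin m → Subgroup ↥H
  internal : IsInternalProductFamily factor
  strong : ∀ i, StronglyIndecomposable ↥(factor i)

/-- Equivalence of strong Remak decompositions: same number of factors and, up to a
permutation of the indices, commensurable factors. -/
def RemakEquiv {G G' : Type*} [Group G] [Group G'] {m n : ℕ}
    (D : StrongRemakDecomposition G m) (D' : StrongRemakDecomposition G' n) : Prop :=
  ∃ σ : Fin m ≃ Fin n, ∀ i, AbsCommensurable ↥(D.factor i) ↥(D'.factor (σ i))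

/-- A group has generalized torsion if it contains a nontrivial element `α` such that some
nonempty product of conjugates of `α` is trivial. -/
def HasGeneralizedTorsion (G : Type*) [Group G] : Prop :=
  ∃ α : G, α ≠ 1 ∧ ∃ βs : List G, βs ≠ [] ∧ (βs.map fun β => β * α * β⁻¹).prod = 1

/-!
Strong Remak decompositions travel along commensurability. Write `D` as an injective
homomorphism with finite-index image from the product of its factors into `G`. If `G₀ ≤ G`
and `H₀ ≤ G'` are isomorphic finite-index subgroups, the parts of the factors that lie in
`G₀` are finite-index subgroups of them, so still strongly indecomposable, and their
product embeds into `G₀`, hence into `G'`, again with finite-index image. This gives a strong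
Remak decomposition of `G'` whose factors are commensurable with those of `D`, and uniqueness
for `G'` matches them with the factors of `D'`. Conversely, factorwise commensurability makes
the two products commensurable, and each group is commensurable with its product of factors.
-/

section

variable {G H K : Type*} [Group G] [Group H] [Group K]

theorem _root_.Subgroup.finiteIndex_comap (L : Subgroup H) [L.FiniteIndex] (f : G →* H) :
    (L.comap f).FiniteIndex := by
  have : L.IsFiniteRelIndex f.range := Subgroup.isFiniteRelIndex_of_finiteIndex
  exact ⟨by rw [Subgroup.index_comap]; exact Subgroup.relIndex_ne_zero⟩

theorem _root_.Subgroup.index_pi_univ {ι : Type*} [Fintype ι] {A : ι → Type*}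
    [∀ i, Group (A i)] (L : ∀ i, Subgroup (A i)) :
    (Subgroup.pi Set.univ L).index = ∏ i, (L i).index := by
  simp_rw [Subgroup.index, ← Nat.card_pi]
  refine Nat.card_congr
    ((Quotient.congrRight fun x y => ?_).trans (Setoid.piQuotientEquiv _).symm)
  rw [QuotientGroup.leftRel_pi]

def _root_.MulEquiv.piCongrLeft' {ι κ : Type*} (M : ι → Type*) [∀ i, Mul (M i)]
    (e : ι ≃ κ) : (∀ i, M i) ≃* ∀ k, M (e.symm k) :=
  { Equiv.piCongrLeft' M e with map_mul' := fun _ _ => rfl }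

def _root_.MonoidHom.IsFiniteIndexEmbedding (f : G →* H) : Prop :=
  Function.Injective f ∧ f.range.FiniteIndex

theorem _root_.MonoidHom.IsFiniteIndexEmbedding.comp {g : H →* K} {f : G →* H}
    (hg : g.IsFiniteIndexEmbedding) (hf : f.IsFiniteIndexEmbedding) :
    (g.comp f).IsFiniteIndexEmbedding := by
  refine ⟨hg.1.comp hf.1, ⟨?_⟩⟩
  rw [MonoidHom.range_comp, Subgroup.index_map_of_injective _ hg.1]
  exact mul_ne_zero hf.2.index_ne_zero hg.2.index_ne_zero

theorem _root_.MonoidHom.IsFiniteIndexEmbedding.of_comp {g : H →* K} {f : G →* H}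
    (hgf : (g.comp f).IsFiniteIndexEmbedding) (hg : Function.Injective g) :
    f.IsFiniteIndexEmbedding := by
  refine ⟨Function.Injective.of_comp hgf.1, ⟨?_⟩⟩
  have := hgf.2.index_ne_zero
  rw [MonoidHom.range_comp, Subgroup.index_map_of_injective _ hg] at this
  exact left_ne_zero_of_mul this

theorem _root_.MonoidHom.IsFiniteIndexEmbedding.codRestrict {f : G →* H}
    (hf : f.IsFiniteIndexEmbedding) (L : Subgroup H) (h : ∀ x, f x ∈ L) :
    (f.codRestrict L h).IsFiniteIndexEmbedding :=
  .of_comp (g := L.subtype) hf L.subtype_injective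

theorem _root_.MonoidHom.IsFiniteIndexEmbedding.piMap {ι : Type*} [Fintype ι]
    {A B : ι → Type*} [∀ i, Group (A i)] [∀ i, Group (B i)] {f : ∀ i, A i →* B i}
    (hf : ∀ i, (f i).IsFiniteIndexEmbedding) : (MonoidHom.piMap f).IsFiniteIndexEmbedding := by
  have hrange : (MonoidHom.piMap f).range = Subgroup.pi Set.univ fun i => (f i).range := by
    ext x
    refine ⟨?_, fun hx => ?_⟩
    · rintro ⟨y, rfl⟩ i -
      exact ⟨y i, rfl⟩
    · choose y hy using fun i => hx i (Set.mem_univ i)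
      exact ⟨y, funext hy⟩
  refine ⟨fun x y hxy => funext fun i => (hf i).1 (congr_fun hxy i), ⟨?_⟩⟩
  rw [hrange, Subgroup.index_pi_univ]
  exact Finset.prod_ne_zero_iff.mpr fun i _ => (hf i).2.index_ne_zero

theorem _root_.MulEquiv.isFiniteIndexEmbedding (e : G ≃* H) :
    e.toMonoidHom.IsFiniteIndexEmbedding :=
  ⟨e.injective, by rw [MonoidHom.range_eq_top.mpr e.surjective]; infer_instance⟩

theorem _root_.Subgroup.isFiniteIndexEmbedding_subtype (L : Subgroup G) [hL : L.FiniteIndex] :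
    L.subtype.IsFiniteIndexEmbedding :=
  ⟨L.subtype_injective, by rw [L.range_subtype]; infer_instance⟩

theorem _root_.Subgroup.isFiniteIndexEmbedding_inclusion {L M : Subgroup G} [L.FiniteIndex]
    (h : L ≤ M) : (Subgroup.inclusion h).IsFiniteIndexEmbedding :=
  .of_comp (by rw [Subgroup.subtype_comp_inclusion]; exact L.isFiniteIndexEmbedding_subtype)
    M.subtype_injective

theorem absCommensurable_of_isFiniteIndexEmbedding {f : G →* H}
    (hf : f.IsFiniteIndexEmbedding) : AbsCommensurable G H :=
  ⟨⊤, f.range, inferInstance, hf.2,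
    ⟨Subgroup.topEquiv.trans (MonoidHom.ofInjective hf.1)⟩⟩

theorem absCommensurable_of_span {S : Type*} [Group S] {f : S →* G} {g : S →* H}
    (hf : f.IsFiniteIndexEmbedding) (hg : g.IsFiniteIndexEmbedding) : AbsCommensurable G H :=
  ⟨f.range, g.range, hf.2, hg.2,
    ⟨(MonoidHom.ofInjective hf.1).symm.trans (MonoidHom.ofInjective hg.1)⟩⟩

namespace AbsCommensurable

theorem symm (h : AbsCommensurable G H) : AbsCommensurable H G :=
  let ⟨G₀, H₀, hG₀, hH₀, ⟨e⟩⟩ := h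
  ⟨H₀, G₀, hH₀, hG₀, ⟨e.symm⟩⟩

theorem trans (h₁ : AbsCommensurable G H) (h₂ : AbsCommensurable H K) :
    AbsCommensurable G K := by
  obtain ⟨G₀, H₀, hG₀, hH₀, ⟨e₁⟩⟩ := h₁
  obtain ⟨H₁, K₁, hH₁, hK₁, ⟨e₂⟩⟩ := h₂
  exact absCommensurable_of_span (S := ↥(H₀ ⊓ H₁))
    (G₀.isFiniteIndexEmbedding_subtype.comp (e₁.symm.isFiniteIndexEmbedding.comp
      (Subgroup.isFiniteIndexEmbedding_inclusion inf_le_left)))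
    (K₁.isFiniteIndexEmbedding_subtype.comp (e₂.isFiniteIndexEmbedding.comp
      (Subgroup.isFiniteIndexEmbedding_inclusion inf_le_right)))

theorem pi {ι : Type*} [Fintype ι] {A B : ι → Type*} [∀ i, Group (A i)] [∀ i, Group (B i)]
    (h : ∀ i, AbsCommensurable (A i) (B i)) : AbsCommensurable (∀ i, A i) (∀ i, B i) := by
  choose A₀ B₀ hA₀ hB₀ e using h
  exact absCommensurable_of_span
    (.piMap fun i => (A₀ i).isFiniteIndexEmbedding_subtype (hL := hA₀ i))
    (.piMap fun i => ((B₀ i).isFiniteIndexEmbedding_subtype (hL := hB₀ i)).comp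
      (e i).some.isFiniteIndexEmbedding)

end AbsCommensurable

theorem Indecomposable.of_mulEquiv (e : G ≃* H) (h : Indecomposable G) : Indecomposable H := by
  rintro A B ⟨hA, hB, hinf, hsup⟩
  have hsplit : IsInternalProduct (A.map e.symm.toMonoidHom) (B.map e.symm.toMonoidHom) :=
    ⟨hA.map _ e.symm.surjective, hB.map _ e.symm.surjective,
      by rw [← Subgroup.map_inf _ _ _ e.symm.injective, hinf, Subgroup.map_bot],
      by rw [← Subgroup.map_sup, hsup, Subgroup.map_top_of_surjective _ e.symm.surjective]⟩
  simpa only [Subgroup.map_eq_bot_iff_of_injective _ (f := e.symm.toMonoidHom) e.symm.injective]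
    using h _ _ hsplit

theorem StronglyIndecomposable.of_isFiniteIndexEmbedding (h : StronglyIndecomposable H)
    {f : G →* H} (hf : f.IsFiniteIndexEmbedding) : StronglyIndecomposable G := by
  obtain ⟨hH, hdec⟩ := h
  refine ⟨?_, fun U hU => ?_⟩
  · have : Infinite f.range := not_finite_iff_infinite.mp fun hfin => not_finite_iff_infinite.mpr
      hH ((Subgroup.finite_iff_finite_and_finiteIndex f.range).mpr ⟨hfin, hf.2⟩)
    exact (MonoidHom.ofInjective hf.1).toEquiv.infinite_iff.mpr this
  · have hfU := hf.comp (U.isFiniteIndexEmbedding_subtype (hL := hU))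
    exact (hdec _ hfU.2).of_mulEquiv (MonoidHom.ofInjective hfU.1).symm

namespace IsInternalProductFamily

variable {ι : Type*} {N : ι → Subgroup G}

theorem commute (h : IsInternalProductFamily N) :
    Pairwise fun i j => ∀ x y : G, x ∈ N i → y ∈ N j → Commute x y :=
  fun i j hij x y hx hy => Subgroup.commute_of_normal_of_disjoint _ _ (h.1 i) (h.1 j)
    (h.2.1.pairwiseDisjoint hij) x y hx hy

noncomputable def mulEquiv [Fintype ι] (h : IsInternalProductFamily N) : (∀ i, N i) ≃* G :=
  MulEquiv.ofBijective (Subgroup.noncommPiCoprod h.commute)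
    ⟨Subgroup.injective_noncommPiCoprod_of_iSupIndep h.2.1,
      MonoidHom.range_eq_top.mp (by rw [Subgroup.noncommPiCoprod_range, h.2.2])⟩

theorem map_mulEquiv (h : IsInternalProductFamily N) (e : G ≃* H) :
    IsInternalProductFamily fun i => (N i).map e.toMonoidHom := by
  refine ⟨fun i => (h.1 i).map _ e.surjective, fun i => ?_, ?_⟩
  · simp only [disjoint_iff, ← Subgroup.map_iSup]
    rw [← Subgroup.map_inf _ _ _ e.injective, disjoint_iff.mp (h.2.1 i), Subgroup.map_bot]
  · rw [← Subgroup.map_iSup, h.2.2, Subgroup.map_top_of_surjective _ e.surjective]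

end IsInternalProductFamily

theorem isInternalProductFamily_range_mulSingle {ι : Type*} [Finite ι] [DecidableEq ι]
    (A : ι → Type*) [∀ i, Group (A i)] :
    IsInternalProductFamily fun i => (MonoidHom.mulSingle A i).range := by
  refine ⟨fun i => ⟨?_⟩, fun i => ?_, ?_⟩
  · rintro _ ⟨a, rfl⟩ g
    refine ⟨g i * a * (g i)⁻¹, funext fun j => ?_⟩
    rcases eq_or_ne j i with rfl | hji <;> simp [*]
  · rw [disjoint_iff, eq_bot_iff]
    rintro _ ⟨⟨a, rfl⟩, hker⟩
    have hle : (⨆ j, ⨆ (_ : j ≠ i), (MonoidHom.mulSingle A j).range) ≤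
        (Pi.evalMonoidHom A i).ker :=
      iSup₂_le fun j hji => by rintro _ ⟨b, rfl⟩; simp [Pi.mulSingle_eq_of_ne' hji]
    have : a = 1 := by simpa using hle hker
    simp [this]
  · refine eq_top_iff.mpr fun x _ => Subgroup.pi_mem_of_mulSingle_mem x fun i => ?_
    exact Subgroup.mem_iSup_of_mem i ⟨x i, rfl⟩

namespace StrongRemakDecomposition

variable {m : ℕ}

noncomputable def embedding (D : StrongRemakDecomposition G m) : (∀ i, D.factor i) →* G :=
  D.H.subtype.comp D.internal.mulEquiv.toMonoidHom

theorem isFiniteIndexEmbedding_embedding (D : StrongRemakDecomposition G m) :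
    D.embedding.IsFiniteIndexEmbedding :=
  (D.H.isFiniteIndexEmbedding_subtype (hL := D.finiteIndex)).comp
    D.internal.mulEquiv.isFiniteIndexEmbedding

noncomputable def ofEmbedding {A : Fin m → Type*} [∀ i, Group (A i)]
    (hA : ∀ i, StronglyIndecomposable (A i)) {f : (∀ i, A i) →* G}
    (hf : f.IsFiniteIndexEmbedding) : StrongRemakDecomposition G m where
  H := f.range
  finiteIndex := hf.2
  factor i := ((MonoidHom.ofInjective hf.1).toMonoidHom.comp (MonoidHom.mulSingle A i)).range
  internal := by
    simpa only [MonoidHom.range_comp] using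
      (isInternalProductFamily_range_mulSingle A).map_mulEquiv (MonoidHom.ofInjective hf.1)
  strong i := (hA i).of_isFiniteIndexEmbedding
    (MonoidHom.ofInjective ((MonoidHom.ofInjective hf.1).injective.comp
      (Pi.mulSingle_injective i))).symm.isFiniteIndexEmbedding

theorem absCommensurable_factor_ofEmbedding {A : Fin m → Type*} [∀ i, Group (A i)]
    (hA : ∀ i, StronglyIndecomposable (A i)) {f : (∀ i, A i) →* G}
    (hf : f.IsFiniteIndexEmbedding) (i : Fin m) :
    AbsCommensurable (A i) ((ofEmbedding hA hf).factor i) :=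
  absCommensurable_of_isFiniteIndexEmbedding
    (MonoidHom.ofInjective ((MonoidHom.ofInjective hf.1).injective.comp
      (Pi.mulSingle_injective i))).isFiniteIndexEmbedding

theorem exists_absCommensurable_factor (D : StrongRemakDecomposition G m)
    (h : AbsCommensurable G H) :
    ∃ E : StrongRemakDecomposition H m, ∀ i, AbsCommensurable (D.factor i) (E.factor i) := by
  obtain ⟨G₀, H₀, hG₀, hH₀, ⟨φ⟩⟩ := h
  -- `C i` is the part of the `i`-th factor lying in `G₀`; their product embeds into `G₀`.
  let C i : Subgroup (D.factor i) :=
    G₀.comap (D.embedding.comp (MonoidHom.mulSingle (fun j => D.factor j) i))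
  have hC i : (C i).FiniteIndex := G₀.finiteIndex_comap _
  have hCsub i := (C i).isFiniteIndexEmbedding_subtype (hL := hC i)
  let ι := MonoidHom.piMap fun i => (C i).subtype
  have hι := D.isFiniteIndexEmbedding_embedding.comp (.piMap hCsub)
  have hι_mulSingle i (c : C i) : ι (Pi.mulSingle i c) = Pi.mulSingle i (c : D.factor i) :=
    funext (Pi.apply_mulSingle (fun j => (C j).subtype) (fun j => map_one _) i c)
  have hιG₀ x : D.embedding.comp ι x ∈ G₀ :=
    Subgroup.pi_mem_of_mulSingle_mem (H := G₀.comap (D.embedding.comp ι)) x fun i => by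
      rw [Subgroup.mem_comap, MonoidHom.comp_apply, hι_mulSingle]
      exact (x i).2
  have hf := (H₀.isFiniteIndexEmbedding_subtype.comp φ.isFiniteIndexEmbedding).comp
    (hι.codRestrict G₀ hιG₀)
  refine ⟨ofEmbedding (fun i => (D.strong i).of_isFiniteIndexEmbedding (hCsub i)) hf,
    fun i => ?_⟩
  exact (absCommensurable_of_isFiniteIndexEmbedding (hCsub i)).symm.trans
    (absCommensurable_factor_ofEmbedding _ hf i)

end StrongRemakDecomposition

end

theorem absCommensurable_iff_remakEquiv_general {G G' : Type*} [Group G] [Group G']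
    {p q : ℕ}
    (D : StrongRemakDecomposition G p) (D' : StrongRemakDecomposition G' q)
    (hD' : ∀ (n : ℕ) (E : StrongRemakDecomposition G' n), RemakEquiv E D') :
    AbsCommensurable G G' ↔
      ∃ σ : Fin p ≃ Fin q, ∀ i, AbsCommensurable ↥(D.factor i) ↥(D'.factor (σ i)) := by
  constructor
  · intro h
    obtain ⟨E, hE⟩ := D.exists_absCommensurable_factor h
    obtain ⟨σ, hσ⟩ := hD' p E
    exact ⟨σ, fun i => (hE i).trans (hσ i)⟩
  · rintro ⟨σ, hσ⟩
    have hreindex := D'.isFiniteIndexEmbedding_embedding.comp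
      (MulEquiv.piCongrLeft' (fun j => D'.factor j) σ.symm).symm.isFiniteIndexEmbedding
    exact (absCommensurable_of_isFiniteIndexEmbedding D.isFiniteIndexEmbedding_embedding).symm.trans
      ((AbsCommensurable.pi hσ).trans (absCommensurable_of_isFiniteIndexEmbedding hreindex))

/-- If `G` and `G'` are infinite groups, each having a strong Remak
decomposition that is unique up to equivalence, then `G` and `G'` are commensurable if and
only if the two decompositions have the same number of factors and, up to a permutation of
the indices, commensurable factors. -/
theorem absCommensurable_iff_remakEquiv {G G' : Type*} [Group G] [Group G']
    [Infinite G] [Infinite G'] {p q : ℕ}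
    (D : StrongRemakDecomposition G p) (D' : StrongRemakDecomposition G' q)
    (hD : ∀ (m : ℕ) (E : StrongRemakDecomposition G m), RemakEquiv E D)
    (hD' : ∀ (n : ℕ) (E : StrongRemakDecomposition G' n), RemakEquiv E D') :
    AbsCommensurable G G' ↔
      ∃ σ : Fin p ≃ Fin q, ∀ i, AbsCommensurable ↥(D.factor i) ↥(D'.factor (σ i)) :=
  absCommensurable_iff_remakEquiv_general D D' hD'

end ArtinPaper
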